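/- Let ρ, e, π, e_{D_S}, G : ℝ³ × ℝ → ℝ, v, n, q_S : ℝ³ × ℝ → ℝ³ be C¹ with ρ > 0 everywhere, and set the enthalpy h = e + π/ρ. Suppose that at a point (x,t): D_t^S ρ + (div_Γ v) ρ = 0 and ρ D_t^S e + (div_Γ v) π = div_Γ q_S + e_{D_S} + G. Then at that point the enthalpy equation holds: D_t^N (ρ h) + div_Γ (ρ h v − q_S) = e_{D_S} + D_t^S π + G. -/

import Mathlib

noncomputable section

open scoped BigOperators
open Matrix

/-- Points of `ℝ³`. -/
abbrev V3 : Type := Fin 3 → ℝ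

/-- Points of space-time `ℝ³ × ℝ`. -/
abbrev Pt : Type := V3 × ℝ

/-- Euclidean dot product on `ℝ³`. -/
def dot (a b : V3) : ℝ := ∑ j, a j * b j

/-- Spatial partial derivative `∂_j f` (at fixed time). -/
def pd (f : Pt → ℝ) (j : Fin 3) (p : Pt) : ℝ := fderiv ℝ f p (Pi.single j 1, 0)

/-- Time derivative `∂_t f`. -/
def ptd (f : Pt → ℝ) (p : Pt) : ℝ := fderiv ℝ f p (0, 1)

/-- Spatial gradient `∇f`. -/
def grad (f : Pt → ℝ) (p : Pt) : V3 := fun j => pd f j p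

/-- Tangential derivative `∂^Γ_j f = ∂_j f − n_j (n·∇f)`. -/
def pdG (n : Pt → V3) (f : Pt → ℝ) (j : Fin 3) (p : Pt) : ℝ :=
  pd f j p - n p j * dot (n p) (grad f p)

/-- Surface gradient `∇_Γ f`. -/
def gradG (n : Pt → V3) (f : Pt → ℝ) (p : Pt) : V3 := fun j => pdG n f j p

/-- Surface divergence `div_Γ V = Σ_j ∂^Γ_j V_j` of a vector field. -/
def divG (n : Pt → V3) (V : Pt → V3) (p : Pt) : ℝ :=
  ∑ j, pdG n (fun q => V q j) j p

/-- Row-wise surface divergence of a matrix field: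
`(div_Γ M)_i = Σ_j ∂^Γ_j M_{ij}`. -/
def divGM (n : Pt → V3) (M : Pt → Matrix (Fin 3) (Fin 3) ℝ) (p : Pt) : V3 :=
  fun i => ∑ j, pdG n (fun q => M q i j) j p

/-- Material derivative `D_t^S f = ∂_t f + (v·∇)f`. -/
def DtS (v : Pt → V3) (f : Pt → ℝ) (p : Pt) : ℝ := ptd f p + dot (v p) (grad f p)

/-- Normal-time derivative `D_t^N f = ∂_t f + (v·n)(n·∇)f`. -/
def DtN (v n : Pt → V3) (f : Pt → ℝ) (p : Pt) : ℝ :=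
  ptd f p + dot (v p) (n p) * dot (n p) (grad f p)


section Aux

lemma pd_add {f g : Pt → ℝ} {p : Pt} (hf : DifferentiableAt ℝ f p)
    (hg : DifferentiableAt ℝ g p) (j : Fin 3) :
    pd (fun q => f q + g q) j p = pd f j p + pd g j p := by
  unfold pd; rw [fderiv_fun_add hf hg]; simp

lemma pd_mul {f g : Pt → ℝ} {p : Pt} (hf : DifferentiableAt ℝ f p)
    (hg : DifferentiableAt ℝ g p) (j : Fin 3) :
    pd (fun q => f q * g q) j p = f p * pd g j p + g p * pd f j p := by
  unfold pd; rw [fderiv_fun_mul hf hg]; simp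

lemma ptd_add {f g : Pt → ℝ} {p : Pt} (hf : DifferentiableAt ℝ f p)
    (hg : DifferentiableAt ℝ g p) :
    ptd (fun q => f q + g q) p = ptd f p + ptd g p := by
  unfold ptd; rw [fderiv_fun_add hf hg]; simp

lemma ptd_mul {f g : Pt → ℝ} {p : Pt} (hf : DifferentiableAt ℝ f p)
    (hg : DifferentiableAt ℝ g p) :
    ptd (fun q => f q * g q) p = f p * ptd g p + g p * ptd f p := by
  unfold ptd; rw [fderiv_fun_mul hf hg]; simp

lemma DtS_add {v : Pt → V3} {f g : Pt → ℝ} {p : Pt} (hf : DifferentiableAt ℝ f p)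
    (hg : DifferentiableAt ℝ g p) :
    DtS v (fun q => f q + g q) p = DtS v f p + DtS v g p := by
  unfold DtS dot grad
  simp only [ptd_add hf hg, pd_add hf hg, Fin.sum_univ_three]
  ring

lemma DtS_mul {v : Pt → V3} {f g : Pt → ℝ} {p : Pt} (hf : DifferentiableAt ℝ f p)
    (hg : DifferentiableAt ℝ g p) :
    DtS v (fun q => f q * g q) p = f p * DtS v g p + g p * DtS v f p := by
  unfold DtS dot grad
  simp only [ptd_mul hf hg, pd_mul hf hg, Fin.sum_univ_three]
  ring

lemma key_transport (f : Pt → ℝ) (v n W : Pt → V3) (p : Pt)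
    (hf : DifferentiableAt ℝ f p)
    (hv : ∀ j, DifferentiableAt ℝ (fun q => v q j) p)
    (hW : ∀ j, DifferentiableAt ℝ (fun q => W q j) p) :
    DtN v n f p + divG n (fun q => f q • v q - W q) p
      = DtS v f p + f p * divG n v p - divG n W p := by
  have comp : ∀ k, (fun q => (f q • v q - W q) k) = fun q => f q * v q k - W q k := by
    intro k; funext q; simp [Pi.smul_apply, smul_eq_mul, Pi.sub_apply]
  have hpd : ∀ j k : Fin 3, pd (fun q => f q * v q k - W q k) j p
      = f p * pd (fun q => v q k) j p + v p k * pd f j p - pd (fun q => W q k) j p := by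
    intro j k
    unfold pd
    rw [fderiv_fun_sub (f := fun q => f q * v q k) (hf.mul (hv k)) (hW k), fderiv_fun_mul hf (hv k)]
    simp
  unfold DtN DtS divG pdG dot grad
  simp only [comp, hpd, Fin.sum_univ_three]
  ring

end Aux

/-- with enthalpy `h = e + π/ρ` (for `ρ > 0`), if at `p` the
surface continuity equation and the internal energy equation
`ρ D_t^S e + (div_Γ v) π = div_Γ q_S + e_{D_S} + G` hold, then
`D_t^N (ρ h) + div_Γ (ρ h v − q_S) = e_{D_S} + D_t^S π + G` at `p`. -/


theorem surface_enthalpy_equation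
    (ρ e pres eDS G : Pt → ℝ) (v n qS : Pt → V3)
    (hρ : ContDiff ℝ 1 ρ) (he : ContDiff ℝ 1 e) (hpres : ContDiff ℝ 1 pres)
    (heDS : ContDiff ℝ 1 eDS) (hG : ContDiff ℝ 1 G)
    (hv : ContDiff ℝ 1 v) (hn : ContDiff ℝ 1 n) (hqS : ContDiff ℝ 1 qS)
    (hpos : ∀ q, 0 < ρ q)
    (p : Pt)
    (hcont : DtS v ρ p + divG n v p * ρ p = 0)
    (henergy : ρ p * DtS v e p + divG n v p * pres p
      = divG n qS p + eDS p + G p) :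
    DtN v n (fun q => ρ q * (e q + pres q / ρ q)) p
      + divG n (fun q => (ρ q * (e q + pres q / ρ q)) • v q - qS q) p
      = eDS p + DtS v pres p + G p := by
  have hρ' : DifferentiableAt ℝ ρ p := hρ.differentiable one_ne_zero p
  have he' : DifferentiableAt ℝ e p := he.differentiable one_ne_zero p
  have hpres' : DifferentiableAt ℝ pres p := hpres.differentiable one_ne_zero p
  have hv' : ∀ j, DifferentiableAt ℝ (fun q => v q j) p := fun j =>
    (differentiableAt_pi.mp (hv.differentiable one_ne_zero p)) j
  have hqS' : ∀ j, DifferentiableAt ℝ (fun q => qS q j) p := fun j =>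
    (differentiableAt_pi.mp (hqS.differentiable one_ne_zero p)) j
  have h1 : ∀ q, ρ q * (e q + pres q / ρ q) = ρ q * e q + pres q := by
    intro q; field_simp [(hpos q).ne']
  simp only [h1]
  have hf : DifferentiableAt ℝ (fun q => ρ q * e q + pres q) p :=
    (hρ'.mul he').add hpres'
  rw [key_transport _ v n qS p hf hv' hqS',
    DtS_add (f := fun q => ρ q * e q) (hρ'.mul he') hpres', DtS_mul hρ' he']
  linear_combination henergy + e p * hcont
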